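/- Let n ≥ 1 and d = 2^n. Then tr(P_{n,4} · P_sym) = (d+1)(d+2)/6 and tr(P_{n,4} · P_asym) = (d−1)(d−2)/6, where P_sym := (1/24)·Σ_{σ∈S_4} U_σ is the symmetrizer and P_asym := (1/24)·Σ_{σ∈S_4} sgn(σ)·U_σ is the antisymmetrizer on (ℂ^d)^{⊗4}. (These are the dimensions D_[4]^+ and D_[1,1,1,1]^+ of the intersections of the stabilizer code V_{n,4} with the totally symmetric and totally antisymmetric subspaces.) -/

import Mathlib

open scoped BigOperators

noncomputable section

/-- `t`-fold tensor (Kronecker) power of a matrix, acting on `(ℂ^α)^{⊗t}`. -/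
def tpow {α : Type*} [Fintype α] (M : Matrix α α ℂ) (t : ℕ) :
    Matrix (Fin t → α) (Fin t → α) ℂ :=
  Matrix.of fun x y => ∏ i, M (x i) (y i)

/-- The rank-one operator `|ψ⟩⟨ψ|`. -/
def rankOne {α : Type*} (ψ : α → ℂ) : Matrix α α ℂ :=
  Matrix.of fun i j => ψ i * (starRingEnd ℂ) (ψ j)

/-- The operator `U_σ` permuting the `t` tensor factors of `(ℂ^α)^{⊗t}`. -/
def permOp (α : Type*) [DecidableEq α] {t : ℕ} (σ : Equiv.Perm (Fin t)) :
    Matrix (Fin t → α) (Fin t → α) ℂ :=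
  Matrix.of fun x y => if (fun k => x (σ k)) = y then 1 else 0

/-- The projector `P_[t]` onto the symmetric subspace `Sym_t(ℂ^α)`. -/
def symProj (α : Type*) [DecidableEq α] (t : ℕ) :
    Matrix (Fin t → α) (Fin t → α) ℂ :=
  (t.factorial : ℂ)⁻¹ • ∑ σ : Equiv.Perm (Fin t), permOp α σ

/-- Single-qubit Pauli matrices labelled by `𝔽₂²`:
`σ_{(0,0)} = I`, `σ_{(0,1)} = X`, `σ_{(1,0)} = Z`, `σ_{(1,1)} = Y`. -/
def pauli (a : ZMod 2 × ZMod 2) : Matrix (ZMod 2) (ZMod 2) ℂ :=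
  Matrix.of fun x y =>
    if a = (0, 0) then (if x = y then 1 else 0)
    else if a = (0, 1) then (if x = y + 1 then 1 else 0)
    else if a = (1, 0) then (if x = y then (if x = 0 then 1 else -1) else 0)
    else (if x = y + 1 then (if x = 0 then -Complex.I else Complex.I) else 0)

/-- The Pauli operator `W_a`, `a ∈ 𝔽₂^{2n}`, on qubits labelled by a finite type `Q`. -/
def PauliW {Q : Type*} [Fintype Q] (a : Q → ZMod 2 × ZMod 2) :
    Matrix (Q → ZMod 2) (Q → ZMod 2) ℂ :=
  Matrix.of fun x y => ∏ i, pauli (a i) (x i) (y i)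

/-- The stabilizer projector `P_{n,k} = 2^{-2n}·Σ_{a∈𝔽₂^{2n}} W_a^{⊗k}`. -/
def stabProj (n k : ℕ) :
    Matrix (Fin k → (Fin n → ZMod 2)) (Fin k → (Fin n → ZMod 2)) ℂ :=
  ((2 : ℂ) ^ (2 * n))⁻¹ • ∑ a : Fin n → ZMod 2 × ZMod 2, tpow (PauliW a) k

/-- A single-qubit gate `G` applied to qubit `i` of `n` qubits (identity elsewhere). -/
def embedGate (n : ℕ) (G : Matrix (ZMod 2) (ZMod 2) ℂ) (i : Fin n) :
    Matrix (Fin n → ZMod 2) (Fin n → ZMod 2) ℂ :=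
  Matrix.of fun x y =>
    G (x i) (y i) * ∏ k ∈ Finset.univ.erase i, (if x k = y k then (1 : ℂ) else 0)

/-- The Hadamard gate `((1+i)/2)·[[1,1],[1,−1]]`. -/
def hGate : Matrix (ZMod 2) (ZMod 2) ℂ :=
  Matrix.of fun x y => (1 + Complex.I) / 2 * (if x = 1 ∧ y = 1 then -1 else 1)

/-- The phase gate `diag(1, −i)`. -/
def sGate : Matrix (ZMod 2) (ZMod 2) ℂ :=
  Matrix.of fun x y => if x = y then (if x = 0 then 1 else -Complex.I) else 0

/-- The CNOT gate with control qubit `i` and target qubit `j`. -/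
def cnotGate (n : ℕ) (i j : Fin n) :
    Matrix (Fin n → ZMod 2) (Fin n → ZMod 2) ℂ :=
  Matrix.of fun x y =>
    if x i = y i ∧ x j = y i + y j ∧ ∀ k, k ≠ i → k ≠ j → x k = y k then 1 else 0

/-- Generators of the `n`-qubit Clifford group: Hadamard and phase gates on each qubit,
CNOT gates on each ordered pair of distinct qubits. -/
def cliffordGens (n : ℕ) : Set (Matrix (Fin n → ZMod 2) (Fin n → ZMod 2) ℂ) :=
  (⋃ i : Fin n, {embedGate n hGate i}) ∪ (⋃ i : Fin n, {embedGate n sGate i}) ∪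
    ⋃ (i : Fin n) (j : Fin n) (_ : i ≠ j), {cnotGate n i j}

/-- The `n`-qubit Clifford group: the subgroup of the unitary group `U(2^n)` generated by
the Hadamard and phase gates on each qubit together with the CNOT gates. -/
def CliffordGroup (n : ℕ) : Subgroup (Matrix.unitaryGroup (Fin n → ZMod 2) ℂ) :=
  Subgroup.closure
    {U : Matrix.unitaryGroup (Fin n → ZMod 2) ℂ |
      (U : Matrix (Fin n → ZMod 2) (Fin n → ZMod 2) ℂ) ∈ cliffordGens n}

/-- The antisymmetrizer `(1/t!)·Σ_σ sgn(σ)·U_σ` on `(ℂ^α)^{⊗t}`. -/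
def antisymProj (α : Type*) [DecidableEq α] (t : ℕ) :
    Matrix (Fin t → α) (Fin t → α) ℂ :=
  (t.factorial : ℂ)⁻¹ •
    ∑ σ : Equiv.Perm (Fin t), ((Equiv.Perm.sign σ : ℤ) : ℂ) • permOp α σ

/-!
Write `σ_{(p,q)} = i^{pq} X^q Z^p`. In the fourth tensor power the phase `i^{4pq}` disappears,
and `tr(W_a^{⊗4} U_σ)` factorises over the qubits. On one qubit, summing
`Σ_z ∏_k ⟨z_{σ k}| X^q Z^p |z_k⟩` over the `Z`-part `p` keeps exactly the even-parity words
`z`, so `Σ_b tr(σ_b^{⊗4} U_σ) = 2 N(σ)`, where `N(σ) = #(shiftFixedEven σ)` counts the pairs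
`(q, z)` with `z ∘ σ = z + q` and `Σ_k z_k = 0`. Hence `tr(P_{n,4} U_σ) = N(σ)^n / 2^n`. By evaluation,
`N(σ)` is `8, 4, 8, 2, 4` on the cycle types `1⁴, 2·1², 2², 3·1, 4` of `S_4`, and averaging
over `S_4`, with or without signs, gives the two dimensions.
-/

open Finset Matrix Complex

theorem ZMod.eq_zero_or_eq_one (x : ZMod 2) : x = 0 ∨ x = 1 := by decide +revert

theorem AddChar.map_finset_sum_eq_prod {A M ι : Type*} [AddCommMonoid A] [CommMonoid M]
    (ψ : AddChar A M) (s : Finset ι) (f : ι → A) :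
    ψ (∑ i ∈ s, f i) = ∏ i ∈ s, ψ (f i) := by
  induction s using Finset.cons_induction with
  | empty => simp
  | cons a s ha ih => rw [sum_cons, prod_cons, AddChar.map_add_eq_mul, ih]

theorem trace_tpow_mul_permOp {α : Type*} [Fintype α] [DecidableEq α] (M : Matrix α α ℂ)
    {t : ℕ} (σ : Equiv.Perm (Fin t)) :
    trace (tpow M t * permOp α σ) = ∑ y : Fin t → α, ∏ i, M (y (σ i)) (y i) := by
  simp only [trace, Matrix.diag, mul_apply, tpow, permOp, of_apply, mul_ite, mul_one, mul_zero]
  rw [Finset.sum_comm]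
  simp only [Finset.sum_ite_eq, Finset.mem_univ, if_true]

theorem sum_trace_tpow_pauliW_mul_permOp {Q : Type*} [Fintype Q] [DecidableEq Q] {t : ℕ}
    (σ : Equiv.Perm (Fin t)) :
    ∑ a : Q → ZMod 2 × ZMod 2, trace (tpow (PauliW a) t * permOp (Q → ZMod 2) σ) =
      (∑ b, trace (tpow (pauli b) t * permOp (ZMod 2) σ)) ^ Fintype.card Q := by
  simp only [trace_tpow_mul_permOp, PauliW, of_apply]
  let f : (ZMod 2 × ZMod 2) × (Fin t → ZMod 2) → ℂ := fun u =>
    ∏ i, pauli u.1 (u.2 (σ i)) (u.2 i)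
  have hqubit : ∀ a : Q → ZMod 2 × ZMod 2,
      ∑ y : Fin t → Q → ZMod 2, ∏ i, ∏ q, pauli (a q) (y (σ i) q) (y i q) =
        ∑ w : Q → Fin t → ZMod 2, ∏ q, f (a q, w q) :=
    fun a => Fintype.sum_equiv (Equiv.piComm _) _ _ fun y => prod_comm
  calc _ = ∑ u : Q → (ZMod 2 × ZMod 2) × (Fin t → ZMod 2), ∏ q, f (u q) := by
        simp only [hqubit, ← Fintype.sum_prod_type']
        exact Fintype.sum_equiv (Equiv.arrowProdEquivProdArrow _ _ _).symm _ _ fun _ => rfl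
    _ = (∑ u, f u) ^ Fintype.card Q := by rw [← Fintype.prod_sum, prod_const, card_univ]
    _ = _ := by rw [Fintype.sum_prod_type]

def parityChar : AddChar (ZMod 2) ℂ := AddChar.zmodChar 2 (ζ := -1) (by norm_num)

theorem parityChar_apply (x : ZMod 2) : parityChar x = if x = 0 then 1 else -1 := by
  rcases x.eq_zero_or_eq_one with rfl | rfl <;>
    simp [parityChar, AddChar.zmodChar_apply, ZMod.val_one]

theorem pauli_apply (p q x y : ZMod 2) :
    pauli (p, q) x y = I ^ (p.val * q.val) * if x = y + q then parityChar (p * y) else 0 := by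
  rcases p.eq_zero_or_eq_one with rfl | rfl <;> rcases q.eq_zero_or_eq_one with rfl | rfl <;>
    rcases x.eq_zero_or_eq_one with rfl | rfl <;> rcases y.eq_zero_or_eq_one with rfl | rfl <;>
    simp +decide [pauli, parityChar_apply, ZMod.val_one]

theorem sum_parityChar_mul (s : ZMod 2) : ∑ p, parityChar (p * s) = if s = 0 then 2 else 0 := by
  rw [show (univ : Finset (ZMod 2)) = {0, 1} by decide, sum_pair zero_ne_one]
  rcases s.eq_zero_or_eq_one with rfl | rfl <;> norm_num [parityChar_apply]

theorem prod_pauli_apply {t : ℕ} (ht : 4 ∣ t) (σ : Equiv.Perm (Fin t)) (p q : ZMod 2)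
    (z : Fin t → ZMod 2) :
    ∏ i, pauli (p, q) (z (σ i)) (z i) =
      if ∀ i, z (σ i) = z i + q then parityChar (p * ∑ i, z i) else 0 := by
  obtain ⟨k, rfl⟩ := ht
  have hphase : ∏ _i : Fin (4 * k), I ^ (p.val * q.val) = 1 := by
    rw [prod_const, card_univ, Fintype.card_fin, ← pow_mul, mul_comm, mul_assoc, pow_mul,
      I_pow_four, one_pow]
  simp only [pauli_apply, prod_mul_distrib, hphase, one_mul, Fintype.prod_ite_zero]
  rw [mul_sum, AddChar.map_finset_sum_eq_prod]
  -- the two sides carry different `Decidable (∀ i, _)` instances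
  congr

def shiftFixedEven {t : ℕ} (σ : Equiv.Perm (Fin t)) : Finset (ZMod 2 × (Fin t → ZMod 2)) :=
  univ.filter fun w => (∀ i, w.2 (σ i) = w.2 i + w.1) ∧ ∑ i, w.2 i = 0

theorem sum_trace_tpow_pauli_mul_permOp {t : ℕ} (ht : 4 ∣ t) (σ : Equiv.Perm (Fin t)) :
    ∑ b, trace (tpow (pauli b) t * permOp (ZMod 2) σ) = 2 * #(shiftFixedEven σ) := by
  simp only [trace_tpow_mul_permOp, Fintype.sum_prod_type, prod_pauli_apply ht]
  rw [sum_comm]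
  simp only [shiftFixedEven, natCast_card_filter, Fintype.sum_prod_type]
  rw [mul_sum]
  refine Fintype.sum_congr _ _ fun q => ?_
  rw [sum_comm, mul_sum]
  refine Fintype.sum_congr _ _ fun z => ?_
  rw [sum_ite_irrel, sum_const_zero, sum_parityChar_mul]
  split_ifs <;> simp_all

theorem trace_stabProj_mul_permOp (n : ℕ) {t : ℕ} (ht : 4 ∣ t) (σ : Equiv.Perm (Fin t)) :
    trace (stabProj n t * permOp (Fin n → ZMod 2) σ) =
      (#(shiftFixedEven σ) : ℂ) ^ n / 2 ^ n := by
  rw [stabProj, smul_mul, trace_smul, sum_mul, trace_sum, sum_trace_tpow_pauliW_mul_permOp,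
    sum_trace_tpow_pauli_mul_permOp ht, Fintype.card_fin, smul_eq_mul, mul_pow, two_mul,
    pow_add]
  field_simp

theorem trace_mul_symProj {α : Type*} [Fintype α] [DecidableEq α] {t : ℕ}
    (A : Matrix (Fin t → α) (Fin t → α) ℂ) :
    trace (A * symProj α t) =
      (∑ σ : Equiv.Perm (Fin t), trace (A * permOp α σ)) / t.factorial := by
  rw [symProj, Matrix.mul_smul, trace_smul, mul_sum, trace_sum, smul_eq_mul, inv_mul_eq_div]

theorem trace_mul_antisymProj {α : Type*} [Fintype α] [DecidableEq α] {t : ℕ}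
    (A : Matrix (Fin t → α) (Fin t → α) ℂ) :
    trace (A * antisymProj α t) =
      (∑ σ : Equiv.Perm (Fin t), (Equiv.Perm.sign σ : ℤ) * trace (A * permOp α σ)) /
        t.factorial := by
  simp only [antisymProj, Matrix.mul_smul, trace_smul, mul_sum, trace_sum, smul_eq_mul,
    inv_mul_eq_div, sum_div]

theorem card_shiftFixedEven_mem (σ : Equiv.Perm (Fin 4)) :
    #(shiftFixedEven σ) ∈ ({2, 4, 8} : Finset ℕ) := by
  revert σ; decide

theorem sum_mul_card_shiftFixedEven_pow (w : Equiv.Perm (Fin 4) → ℤ) (n : ℕ) :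
    ∑ σ, (w σ : ℂ) * #(shiftFixedEven σ) ^ n =
      ((∑ σ with #(shiftFixedEven σ) = 2, w σ : ℤ) : ℂ) * 2 ^ n +
      ((∑ σ with #(shiftFixedEven σ) = 4, w σ : ℤ) : ℂ) * 4 ^ n +
      ((∑ σ with #(shiftFixedEven σ) = 8, w σ : ℤ) : ℂ) * 8 ^ n := by
  have hfiber : ∀ v : ℕ,
      ∑ σ with #(shiftFixedEven σ) = v, (w σ : ℂ) * #(shiftFixedEven σ) ^ n =
        ((∑ σ with #(shiftFixedEven σ) = v, w σ : ℤ) : ℂ) * v ^ n := fun v => by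
    rw [Int.cast_sum, sum_mul]
    exact sum_congr rfl fun σ hσ => by rw [(mem_filter.1 hσ).2]
  rw [← sum_fiberwise_of_maps_to (fun σ _ => card_shiftFixedEven_mem σ)]
  simp only [hfiber]
  rw [sum_insert (by decide), sum_insert (by decide), sum_singleton]
  push_cast
  ring

theorem sum_card_shiftFixedEven_pow (n : ℕ) :
    ∑ σ : Equiv.Perm (Fin 4), (#(shiftFixedEven σ) : ℂ) ^ n =
      8 * 2 ^ n + 12 * 4 ^ n + 4 * 8 ^ n := by
  have h := sum_mul_card_shiftFixedEven_pow (fun _ => 1) n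
  have h2 : (∑ σ : Equiv.Perm (Fin 4) with #(shiftFixedEven σ) = 2, (1 : ℤ)) = 8 := by decide
  have h4 : (∑ σ : Equiv.Perm (Fin 4) with #(shiftFixedEven σ) = 4, (1 : ℤ)) = 12 := by decide
  have h8 : (∑ σ : Equiv.Perm (Fin 4) with #(shiftFixedEven σ) = 8, (1 : ℤ)) = 4 := by decide
  rw [h2, h4, h8] at h
  simpa using h

theorem sum_sign_mul_card_shiftFixedEven_pow (n : ℕ) :
    ∑ σ : Equiv.Perm (Fin 4), (Equiv.Perm.sign σ : ℤ) * (#(shiftFixedEven σ) : ℂ) ^ n =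
      8 * 2 ^ n - 12 * 4 ^ n + 4 * 8 ^ n := by
  have h2 : (∑ σ : Equiv.Perm (Fin 4) with #(shiftFixedEven σ) = 2,
    (Equiv.Perm.sign σ : ℤ)) = 8 := by decide
  have h4 : (∑ σ : Equiv.Perm (Fin 4) with #(shiftFixedEven σ) = 4,
    (Equiv.Perm.sign σ : ℤ)) = -12 := by decide
  have h8 : (∑ σ : Equiv.Perm (Fin 4) with #(shiftFixedEven σ) = 8,
    (Equiv.Perm.sign σ : ℤ)) = 4 := by decide
  rw [sum_mul_card_shiftFixedEven_pow, h2, h4, h8]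
  push_cast
  ring

theorem stmt6 (n : ℕ) :
    Matrix.trace (stabProj n 4 * symProj (Fin n → ZMod 2) 4)
        = ((2 : ℂ) ^ n + 1) * ((2 : ℂ) ^ n + 2) / 6 ∧
      Matrix.trace (stabProj n 4 * antisymProj (Fin n → ZMod 2) 4)
        = ((2 : ℂ) ^ n - 1) * ((2 : ℂ) ^ n - 2) / 6 := by
  have h4 : (4 : ℂ) ^ n = (2 ^ n) ^ 2 := by rw [← pow_mul, mul_comm, pow_mul]; norm_num
  have h8 : (8 : ℂ) ^ n = (2 ^ n) ^ 3 := by rw [← pow_mul, mul_comm, pow_mul]; norm_num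
  have h24 : ((Nat.factorial 4 : ℕ) : ℂ) = 24 := by norm_num [Nat.factorial]
  simp only [trace_mul_symProj, trace_mul_antisymProj, trace_stabProj_mul_permOp n (dvd_refl 4),
    ← sum_div, mul_div_assoc', sum_card_shiftFixedEven_pow, sum_sign_mul_card_shiftFixedEven_pow,
    h4, h8, h24]
  constructor <;> · field_simp; ring

end
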